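/- arXiv:1712.03971 — 2 statements merged into one kernel-verified Lean document; each statement's English description precedes it below -/
import Mathlib

section
/- Let $\beta > 0$, $\alpha > 0$, $p > 0$, $q \ge 0$, and suppose $2p \le \beta$ and $q^2 \beta \le 2 p \alpha^2$. Then the ellipse centered at $(-p, 0)$ with semi-axes $p$ and $q$ is contained in the closed ellipse centered at $(-\beta/2, 0)$ with semi-axes $\beta/2$ and $\alpha$; that is, for every $\theta \in \mathbb{R}$, the point $(x, y) = (-p(1 - \cos\theta),\; q \sin\theta)$ satisfies $\left(\frac{x}{\beta/2} + 1\right)^2 + \left(\frac{y}{\alpha}\right)^2 \le 1$. -/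
open Real

theorem ellipse_containment
    (β α p q : ℝ) (hβ : 0 < β) (hα : 0 < α) (hp : 0 < p) (hq : 0 ≤ q)
    (h1 : 2 * p ≤ β) (h2 : q ^ 2 * β ≤ 2 * p * α ^ 2) (θ : ℝ) :
    ((-p * (1 - Real.cos θ)) / (β / 2) + 1) ^ 2 + (q * Real.sin θ / α) ^ 2 ≤ 1 := by
  have hc1 : Real.cos θ ≤ 1 := Real.cos_le_one θ
  have hc2 : -1 ≤ Real.cos θ := Real.neg_one_le_cos θ
  have hsc : Real.sin θ ^ 2 + Real.cos θ ^ 2 = 1 := Real.sin_sq_add_cos_sq θ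
  have hβ' : β ≠ 0 := ne_of_gt hβ
  have hα' : α ≠ 0 := ne_of_gt hα
  have e1 : (-p * (1 - Real.cos θ)) / (β / 2) + 1 = (β - 2 * p * (1 - Real.cos θ)) / β := by
    field_simp; ring
  have e2 : (q * Real.sin θ / α) ^ 2 = q ^ 2 * Real.sin θ ^ 2 / α ^ 2 := by
    rw [div_pow]; ring_nf
  rw [e1, e2, div_pow,
    div_add_div _ _ (by positivity : (β : ℝ) ^ 2 ≠ 0) (by positivity : (α : ℝ) ^ 2 ≠ 0),
    div_le_one (by positivity)]
  have hs2 : Real.sin θ ^ 2 = (1 - Real.cos θ) * (1 + Real.cos θ) := by nlinarith [hsc]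
  have hA : q ^ 2 * β * (β * Real.sin θ ^ 2) ≤ 2 * p * α ^ 2 * (β * Real.sin θ ^ 2) :=
    mul_le_mul_of_nonneg_right h2 (by positivity)
  have hB : 0 ≤ 2 * p * (1 - Real.cos θ) ^ 2 * (β - 2 * p) * α ^ 2 := by
    have := sub_nonneg.2 h1
    positivity
  rw [hs2] at hA
  have hC : β ^ 2 * (q ^ 2 * Real.sin θ ^ 2)
      = β ^ 2 * (q ^ 2 * ((1 - Real.cos θ) * (1 + Real.cos θ))) := by rw [hs2]
  nlinarith [hA, hB, hC]
end

section
/- Let $p$ be a real polynomial of degree at most $2$ with $p(0) = 1$ and $p'(0) = 1$, and suppose $\beta > 0$ is such that $|p(z)| \le 1$ for all $z \in [-\beta, 0]$. Then $\beta \le 8$, with equality attained by the shifted Chebyshev polynomial $p(z) = T_2(1 + z/4) = 1 + z + z^2/8$. -/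
open Polynomial

theorem degree_two_first_order_optimal_stability
    (p : Polynomial ℝ) (hdeg : p.natDegree ≤ 2)
    (h0 : p.eval 0 = 1) (h1 : p.derivative.eval 0 = 1)
    (β : ℝ) (hβ : 0 < β)
    (hstab : ∀ z ∈ Set.Icc (-β) 0, |p.eval z| ≤ 1) :
    β ≤ 8 ∧ ∀ z ∈ Set.Icc (-8 : ℝ) 0, |1 + z + z ^ 2 / 8| ≤ 1 := by
  have hc0 : p.coeff 0 = 1 := by rwa [Polynomial.coeff_zero_eq_eval_zero]
  have hc1 : p.coeff 1 = 1 := by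
    have := Polynomial.coeff_derivative p 0
    rw [Polynomial.coeff_zero_eq_eval_zero] at this
    simpa using this.symm.trans h1
  have hev : ∀ z : ℝ, p.eval z = 1 + z + p.coeff 2 * z ^ 2 := by
    intro z
    have h3 : p.natDegree < 3 := by omega
    rw [Polynomial.eval_eq_sum_range' h3]
    simp [Finset.sum_range_succ, hc0, hc1]
  constructor
  · by_contra hgt
    push_neg at hgt
    have h4 : |p.eval (-4)| ≤ 1 := by
      apply hstab
      constructor <;> linarith
    have hb : |p.eval (-β)| ≤ 1 := by
      apply hstab
      constructor <;> linarith
    rw [hev, abs_le] at h4 hb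
    obtain ⟨h4l, _⟩ := h4
    obtain ⟨_, hbr⟩ := hb
    nlinarith [sq_nonneg β, sq_nonneg (β - 8)]
  · intro z hz
    obtain ⟨hz1, hz2⟩ := hz
    rw [abs_le]
    constructor <;> nlinarith [sq_nonneg (z + 4), mul_nonneg (by linarith : (0:ℝ) ≤ z + 8) (by linarith : (0:ℝ) ≤ -z)]
end
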